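/- arXiv:1801.07930 — 2 statements merged into one kernel-verified Lean document; each statement's English description precedes it below -/
import Mathlib

section
/- Let 2 ≤ j < i ≤ n. Then w_k^{(i,j−1)}(j−1) > w_k^{(i,j−1)}(j) for every k with 1 ≤ k ≤ i−j, and w_{i−j+1}^{(i,j−1)}(j−1) < w_{i−j+1}^{(i,j−1)}(j). -/
/-!
The product `s_a s_{a+1} ⋯ s_b` is the cycle `(a a+1 ⋯ b+1)`, i.e. the `List.formPerm` of
`[a, a+1, …, b+1]`, and the descending product `s_a s_{a-1} ⋯ s_b` is the inverse of
`s_b s_{b+1} ⋯ s_a`. Hence `w_k^{(i,j-1)}` can be evaluated at `j-1` and `j` directly: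
for `k ≤ i-j` it sends `j-1 ↦ i-k+1` and `j ↦ j-1`, while for `k = i-j+1` it sends
`j-1 ↦ j` and `j ↦ j+1`.
-/

open MvPolynomial Finset

/-- The product of simple transpositions `s_a s_{a-1} ⋯ s_b` (descending indices),
where `s_r` interchanges `r` and `r+1`; the empty product (when `a < b`) is the identity. -/
def sdesc (a b : ℕ) : Equiv.Perm ℕ :=
  (((List.range' b (a + 1 - b)).reverse).map (fun r => Equiv.swap r (r + 1))).prod

/-- The product of simple transpositions `s_a s_{a+1} ⋯ s_b` (ascending indices);
the empty product (when `b < a`) is the identity. -/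
def sasc (a b : ℕ) : Equiv.Perm ℕ :=
  ((List.range' a (b + 1 - a)).map (fun r => Equiv.swap r (r + 1))).prod

/-- The permutation `w_k^{(i,j)} = (s_{i-k} s_{i-k-1} ⋯ s_j)(s_{i-k+1} s_{i-k+2} ⋯ s_{i-1})`,
regarded as a permutation of `ℕ` (supported on `{1, …, n}`). -/
def wkij (i j k : ℕ) : Equiv.Perm ℕ := sdesc (i - k) j * sasc (i - k + 1) (i - 1)

theorem List.prod_map_swap_range'_eq_formPerm (a m : ℕ) :
    ((List.range' a m).map fun r => Equiv.swap r (r + 1)).prod =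
      (List.range' a (m + 1)).formPerm := by
  induction m generalizing a with
  | zero => rfl
  | succ m ih =>
    rw [List.range'_succ, List.map_cons, List.prod_cons, ih, List.range'_succ (s := a) (n := m + 1),
      List.range'_succ (s := a + 1), List.formPerm_cons_cons]

theorem sasc_eq_formPerm (a b : ℕ) : sasc a b = (List.range' a (b + 2 - a)).formPerm := by
  rcases le_or_gt a (b + 1) with hab | hab
  · rw [sasc, List.prod_map_swap_range'_eq_formPerm, show b + 1 - a + 1 = b + 2 - a by omega]
  · rw [sasc, Nat.sub_eq_zero_of_le hab.le, Nat.sub_eq_zero_of_le hab]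
    rfl

theorem sdesc_eq_inv_sasc (a b : ℕ) : sdesc a b = (sasc b a)⁻¹ := by
  rw [sdesc, sasc, List.prod_inv_reverse, List.map_map, List.map_reverse]
  simp only [Function.comp_def, Equiv.swap_inv]

section sasc

variable {a b x : ℕ}

theorem sasc_apply_of_notMem (hx : x < a ∨ b + 1 < x) : sasc a b x = x := by
  rw [sasc_eq_formPerm, List.formPerm_apply_of_notMem]
  simp only [List.mem_range'_1]
  omega

theorem sasc_apply_of_le_of_le (hax : a ≤ x) (hxb : x ≤ b) : sasc a b x = x + 1 := by
  have hcycle :=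
    List.formPerm_apply_lt_getElem (List.range' a (b + 2 - a)) List.nodup_range' (x - a)
    (by simp only [List.length_range']; omega)
  simp only [List.getElem_range', one_mul] at hcycle
  rwa [sasc_eq_formPerm, ← show a + (x - a) = x by omega,
    show a + (x - a) + 1 = a + (x - a + 1) by omega]

theorem sasc_apply_succ (hab : a ≤ b + 1) : sasc a b (b + 1) = a := by
  have hcycle :=
    List.formPerm_apply_getElem (List.range' a (b + 2 - a)) List.nodup_range' (b + 1 - a)
    (by simp only [List.length_range']; omega)
  simp only [List.getElem_range', List.length_range', one_mul,
    show b + 1 - a + 1 = b + 2 - a by omega, Nat.mod_self, mul_zero, add_zero] at hcycle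
  rwa [sasc_eq_formPerm, ← show a + (b + 1 - a) = b + 1 by omega]

end sasc

section sdesc

variable {a b x : ℕ}

theorem sdesc_apply_of_gt (hx : a + 1 < x) : sdesc a b x = x := by
  rw [sdesc_eq_inv_sasc, Equiv.Perm.inv_eq_iff_eq, sasc_apply_of_notMem (.inr hx)]

theorem sdesc_apply_self (hba : b ≤ a + 1) : sdesc a b b = a + 1 := by
  rw [sdesc_eq_inv_sasc, Equiv.Perm.inv_eq_iff_eq, sasc_apply_succ hba]

theorem sdesc_apply_of_lt_of_le (hbx : b < x) (hxa : x ≤ a + 1) : sdesc a b x = x - 1 := by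
  rw [sdesc_eq_inv_sasc, Equiv.Perm.inv_eq_iff_eq, sasc_apply_of_le_of_le (by omega) (by omega)]
  omega

end sdesc

theorem stmt11_general (i j : ℕ) (hj : 2 ≤ j) (hji : j < i) :
    (∀ k, 1 ≤ k → k ≤ i - j → wkij i (j - 1) k j < wkij i (j - 1) k (j - 1)) ∧
    wkij i (j - 1) (i - j + 1) (j - 1) < wkij i (j - 1) (i - j + 1) j := by
  refine ⟨fun k hk hki => ?_, ?_⟩
  · simp only [wkij, Equiv.Perm.mul_apply]
    rw [sasc_apply_of_notMem (.inl (by omega)), sasc_apply_of_notMem (.inl (by omega)),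
      sdesc_apply_of_lt_of_le (by omega) (by omega), sdesc_apply_self (by omega)]
    omega
  · have hik : i - (i - j + 1) = j - 1 := by omega
    simp only [wkij, Equiv.Perm.mul_apply, hik, Nat.sub_add_cancel (by omega : 1 ≤ j)]
    rw [sasc_apply_of_notMem (.inl (by omega)), sasc_apply_of_le_of_le le_rfl (by omega),
      sdesc_apply_self (by omega), sdesc_apply_of_gt (by omega)]
    omega

/-- inequalities in the proof of Theorem 1.  For `2 ≤ j < i ≤ n`:
`w_k^{(i,j-1)}(j-1) > w_k^{(i,j-1)}(j)` for `1 ≤ k ≤ i-j`, and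
`w_{i-j+1}^{(i,j-1)}(j-1) < w_{i-j+1}^{(i,j-1)}(j)`. -/
theorem stmt11 (n i j : ℕ) (hj : 2 ≤ j) (hji : j < i) (hin : i ≤ n) :
    (∀ k, 1 ≤ k → k ≤ i - j → wkij i (j - 1) k j < wkij i (j - 1) k (j - 1)) ∧
    wkij i (j - 1) (i - j + 1) (j - 1) < wkij i (j - 1) (i - j + 1) j :=
  stmt11_general i j hj hji
end

section
/- Let 1 ≤ j < i ≤ n and 1 ≤ k ≤ i−j. Then the one-line notation of w_k^{(i,j)} is determined as follows: w_k^{(i,j)}(j) = i−k+1, w_k^{(i,j)}(i) = i−k, and the remaining values {1, …, n} \ {i−k, i−k+1} occupy the remaining positions in increasing order; in particular, for all positions r < s with r, s ∉ {j, i}, one has w_k^{(i,j)}(r) < w_k^{(i,j)}(s). -/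
/-!
Both factors of `w_k^{(i,j)}` are cycles of consecutive integers: `s_a s_{a-1} ⋯ s_b` sends `b`
to `a + 1` and shifts `b + 1, …, a + 1` down by one, while `s_a s_{a+1} ⋯ s_b` sends `b + 1` to `a`
and shifts `a, …, b` up by one. Composing the two gives `w_k^{(i,j)}` explicitly: it sends `j ↦ i - k + 1`
and `i ↦ i - k`, and elsewhere it is the identity or a shift by `±1` on blocks that stay in order.
-/

open MvPolynomial Finset

lemma sdesc_self (b : ℕ) : sdesc b b = Equiv.swap b (b + 1) := by
  simp [sdesc]

lemma sdesc_succ {a b : ℕ} (h : b ≤ a + 1) :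
    sdesc (a + 1) b = Equiv.swap (a + 1) (a + 2) * sdesc a b := by
  have hlen : a + 1 + 1 - b = (a + 1 - b) + 1 := by omega
  have hend : b + (a + 1 - b) = a + 1 := by omega
  rw [sdesc, hlen, List.range'_concat, List.reverse_append, List.map_append, List.prod_append]
  simp [sdesc, hend]

lemma sdesc_apply {a b : ℕ} (h : b ≤ a) (x : ℕ) :
    sdesc a b x = if x = b then a + 1 else if b < x ∧ x ≤ a + 1 then x - 1 else x := by
  induction a, h using Nat.le_induction with
  | base =>
    rw [sdesc_self, Equiv.swap_apply_def]
    split_ifs <;> omega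
  | succ a hba ih =>
    rw [sdesc_succ (by omega), Equiv.Perm.mul_apply, ih, Equiv.swap_apply_def]
    split_ifs <;> omega

lemma sasc_self (a : ℕ) : sasc a a = Equiv.swap a (a + 1) := by
  simp [sasc]

lemma sasc_succ {a b : ℕ} (h : a ≤ b + 1) :
    sasc a (b + 1) = sasc a b * Equiv.swap (b + 1) (b + 2) := by
  have hlen : b + 1 + 1 - a = (b + 1 - a) + 1 := by omega
  have hend : a + (b + 1 - a) = b + 1 := by omega
  rw [sasc, hlen, List.range'_concat, List.map_append, List.prod_append]
  simp [sasc, hend]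

lemma sasc_eq_one {a b : ℕ} (h : b < a) : sasc a b = 1 := by
  simp [sasc, Nat.sub_eq_zero_of_le h]

lemma sasc_apply {a b : ℕ} (h : a ≤ b) (x : ℕ) :
    sasc a b x = if x = b + 1 then a else if a ≤ x ∧ x ≤ b then x + 1 else x := by
  induction b, h using Nat.le_induction generalizing x with
  | base =>
    rw [sasc_self, Equiv.swap_apply_def]
    split_ifs <;> omega
  | succ b hab ih =>
    rw [sasc_succ (by omega), Equiv.Perm.mul_apply, ih, Equiv.swap_apply_def]
    split_ifs <;> omega

section wkij

variable {i j k : ℕ}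

lemma wkij_apply (hji : j < i) (hk1 : 1 ≤ k) (hk : k ≤ i - j) (x : ℕ) :
    wkij i j k x = if x = j then i - k + 1 else if x = i then i - k
      else if j < x ∧ x ≤ i - k then x - 1
      else if i - k + 1 ≤ x ∧ x < i then x + 1 else x := by
  rw [wkij, Equiv.Perm.mul_apply, sdesc_apply (by omega)]
  rcases hk1.eq_or_lt with rfl | hk2
  · rw [sasc_eq_one (by omega), Equiv.Perm.one_apply]
    split_ifs <;> omega
  · rw [sasc_apply (by omega), Nat.sub_add_cancel (by omega : 1 ≤ i)]
    split_ifs <;> omega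

lemma wkij_apply_left (hji : j < i) (hk1 : 1 ≤ k) (hk : k ≤ i - j) :
    wkij i j k j = i - k + 1 := by
  simp [wkij_apply hji hk1 hk]

lemma wkij_apply_right (hji : j < i) (hk1 : 1 ≤ k) (hk : k ≤ i - j) :
    wkij i j k i = i - k := by
  rw [wkij_apply hji hk1 hk]
  split_ifs <;> omega

lemma wkij_strictMonoOn (hji : j < i) (hk1 : 1 ≤ k) (hk : k ≤ i - j) :
    StrictMonoOn (wkij i j k) ({j, i}ᶜ : Set ℕ) := by
  intro r hr s hs hrs
  simp only [Set.mem_compl_iff, Set.mem_insert_iff, Set.mem_singleton_iff, not_or] at hr hs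
  rw [wkij_apply hji hk1 hk, wkij_apply hji hk1 hk]
  split_ifs <;> omega

end wkij

theorem stmt13_general (n i j k : ℕ) (hji : j < i)
    (hk1 : 1 ≤ k) (hk : k ≤ i - j) :
    wkij i j k j = i - k + 1 ∧
    wkij i j k i = i - k ∧
    ∀ r s, 1 ≤ r → r < s → s ≤ n → r ≠ j → r ≠ i → s ≠ j → s ≠ i →
      wkij i j k r < wkij i j k s :=
  ⟨wkij_apply_left hji hk1 hk, wkij_apply_right hji hk1 hk,
    fun r s _ hrs _ hrj hri hsj hsi =>
      wkij_strictMonoOn hji hk1 hk (by simp [hrj, hri]) (by simp [hsj, hsi]) hrs⟩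

/-- one-line notation of `w_k^{(i,j)}`.  For `1 ≤ j < i ≤ n` and
`1 ≤ k ≤ i-j`: `w_k^{(i,j)}(j) = i-k+1`, `w_k^{(i,j)}(i) = i-k`, and the remaining
values occupy the remaining positions in increasing order; in particular, for all
positions `r < s` in `{1, …, n}` with `r, s ∉ {j, i}`, one has
`w_k^{(i,j)}(r) < w_k^{(i,j)}(s)`. -/
theorem stmt13 (n i j k : ℕ) (hj : 1 ≤ j) (hji : j < i) (hin : i ≤ n)
    (hk1 : 1 ≤ k) (hk : k ≤ i - j) :
    wkij i j k j = i - k + 1 ∧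
    wkij i j k i = i - k ∧
    ∀ r s, 1 ≤ r → r < s → s ≤ n → r ≠ j → r ≠ i → s ≠ j → s ≠ i →
      wkij i j k r < wkij i j k s :=
  stmt13_general n i j k hji hk1 hk
end
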